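/- Admissibility of lifted simulation for ≤-chains: let R be a relation on a countable set S and R̂ its probabilistic lifting. If (μ_i) is an increasing ≤-chain of sub-distributions with supremum μ = ⊔ μ_i (pointwise), and μ_i R̂ ν for all i, then μ R̂ ν. -/

import Mathlib

/-!
Choose couplings `m i` witnessing `μ i R̂ ν`. Since `S × S` is countable, a subsequence of them
converges pointwise (Tychonoff), and the limit is a coupling of `μ = ⊔ μ i` and `ν`: the support
condition survives pointwise limits, the column bound by `ν` survives by Fatou, and the row
marginals converge by dominated convergence, with `m i x y ≤ ν y` as the summable dominating
function.
-/

open scoped ENNReal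

/-- A discrete sub-probability distribution: total mass at most 1. -/
def SubDist {S : Type*} (μ : S → ℝ≥0∞) : Prop := ∑' x, μ x ≤ 1

/-- Probabilistic lifting of a relation via a matching (coupling). -/
def Lift {S : Type*} (R : S → S → Prop) (μ ν : S → ℝ≥0∞) : Prop :=
  ∃ m : S → S → ℝ≥0∞,
    (∀ x y, m x y ≠ 0 → R x y) ∧
    (∀ x, (∑' y, m x y) = μ x) ∧
    (∀ y, (∑' x, m x y) ≤ ν y)

open Filter Topology MeasureTheory

theorem ENNReal.tsum_le_of_tendsto {α : Type*} {f : ℕ → α → ℝ≥0∞} {F : α → ℝ≥0∞} {c : ℝ≥0∞}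
    (hf : ∀ a, Tendsto (fun n => f n a) atTop (𝓝 (F a))) (h : ∀ n, ∑' a, f n a ≤ c) :
    ∑' a, F a ≤ c :=
  ((lowerSemicontinuous_tsum fun a => (continuous_apply a).lowerSemicontinuous).isClosed_preimage
    c).mem_of_tendsto (tendsto_pi_nhds.2 hf) (.of_forall h)

theorem ENNReal.tendsto_tsum_of_dominated {α : Type*} {f : ℕ → α → ℝ≥0∞} {F g : α → ℝ≥0∞}
    (hg : ∑' a, g a ≠ ∞) (hfg : ∀ n a, f n a ≤ g a)
    (hf : ∀ a, Tendsto (fun n => f n a) atTop (𝓝 (F a))) :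
    Tendsto (fun n => ∑' a, f n a) atTop (𝓝 (∑' a, F a)) := by
  let _ : MeasurableSpace α := ⊤
  simp only [← lintegral_count' measurable_from_top] at hg ⊢
  exact tendsto_lintegral_of_dominated_convergence g (fun _ => measurable_from_top)
    (fun n => .of_forall (hfg n)) hg (.of_forall hf)

theorem exists_subseq_tendsto_pi {ι : Type*} [Countable ι] (f : ℕ → ι → ℝ≥0∞) :
    ∃ (L : ι → ℝ≥0∞) (φ : ℕ → ℕ), StrictMono φ ∧
      ∀ i, Tendsto (fun n => f (φ n) i) atTop (𝓝 (L i)) := by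
  obtain ⟨L, -, φ, hφ, hL⟩ := isCompact_univ.tendsto_subseq fun n => Set.mem_univ (f n)
  exact ⟨L, φ, hφ, tendsto_pi_nhds.1 hL⟩

-- `Lift R μ ν` unfolds to `∃ m, IsLiftCoupling R μ ν m`; the proofs below rely on this.
def IsLiftCoupling {S : Type*} (R : S → S → Prop) (μ ν : S → ℝ≥0∞) (m : S → S → ℝ≥0∞) :
    Prop :=
  (∀ x y, m x y ≠ 0 → R x y) ∧ (∀ x, ∑' y, m x y = μ x) ∧ (∀ y, ∑' x, m x y ≤ ν y)

theorem IsLiftCoupling.of_tendsto {S : Type*} {R : S → S → Prop} {μs : ℕ → S → ℝ≥0∞}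
    {μ ν : S → ℝ≥0∞} {m : ℕ → S → S → ℝ≥0∞} {L : S → S → ℝ≥0∞} (hν : ∑' y, ν y ≠ ∞)
    (hm : ∀ n, IsLiftCoupling R (μs n) ν (m n))
    (hmL : ∀ x y, Tendsto (fun n => m n x y) atTop (𝓝 (L x y)))
    (hμ : ∀ x, Tendsto (fun n => μs n x) atTop (𝓝 (μ x))) :
    IsLiftCoupling R μ ν L := by
  refine ⟨fun x y hL => ?_, fun x => ?_, fun y => ?_⟩
  · by_contra hR
    have hm0 : ∀ n, 0 = m n x y := fun n => (not_not.1 (mt ((hm n).1 x y) hR)).symm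
    exact hL (tendsto_nhds_unique (hmL x y) (tendsto_const_nhds.congr hm0))
  · have hdom : ∀ n y, m n x y ≤ ν y := fun n y => (ENNReal.le_tsum x).trans ((hm n).2.2 y)
    exact tendsto_nhds_unique (ENNReal.tendsto_tsum_of_dominated hν hdom (hmL x))
      ((hμ x).congr fun n => ((hm n).2.1 x).symm)
  · exact ENNReal.tsum_le_of_tendsto (fun x => hmL x y) fun n => (hm n).2.2 y

theorem stmt17_general {S : Type*} [Countable S] (R : S → S → Prop)
    (μs : ℕ → S → ℝ≥0∞) (hchain : ∀ i x, μs i x ≤ μs (i + 1) x)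
    (μ ν : S → ℝ≥0∞) (hμ : ∀ x, μ x = ⨆ i, μs i x)
    (hν : SubDist ν)
    (h : ∀ i, Lift R (μs i) ν) :
    Lift R μ ν := by
  choose m hm using h
  obtain ⟨L, φ, hφ, hL⟩ := exists_subseq_tendsto_pi fun n (p : S × S) => m n p.1 p.2
  have hμφ : ∀ x, Tendsto (fun n => μs (φ n) x) atTop (𝓝 (μ x)) := fun x => by
    rw [hμ x]
    exact (tendsto_atTop_iSup (monotone_nat_of_le_succ (hchain · x))).comp hφ.tendsto_atTop
  exact ⟨fun x y => L (x, y), IsLiftCoupling.of_tendsto (ne_top_of_le_ne_top ENNReal.one_ne_top hν)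
    (fun n => hm (φ n)) (fun x y => hL (x, y)) hμφ⟩

/-- Admissibility of lifted simulation for `≤`-chains: if an increasing chain
of sub-distributions is lift-related to `ν`, so is its pointwise supremum. -/
theorem stmt17 {S : Type*} [Countable S] (R : S → S → Prop)
    (μs : ℕ → S → ℝ≥0∞) (hchain : ∀ i x, μs i x ≤ μs (i + 1) x)
    (hsub : ∀ i, SubDist (μs i))
    (μ ν : S → ℝ≥0∞) (hμ : ∀ x, μ x = ⨆ i, μs i x)
    (hμsub : SubDist μ) (hν : SubDist ν)
    (h : ∀ i, Lift R (μs i) ν) :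
    Lift R μ ν :=
  stmt17_general R μs hchain μ ν hμ hν h
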